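/- Let G = A ∗_Λ B be an amalgamated free product with Λ a proper subgroup of both A and B, and let X be the set of elements of G whose normal form a₁b₁⋯aₙbₙλ has a₁ non-trivial. Then: (i) λX = X for every λ ∈ Λ; (ii) for every g ∈ G, the sets (Λ\X)g and Λ\X are almost equal; and (iii) X does not depend on the choice of the right transversals T and T′. In particular, X is a Λ-almost invariant subset of G. -/

import Mathlib

/-!
Call a word reduced if its letters lie in `A ∖ Λ` or `B ∖ Λ` and alternate between the two;
these are the normal words for the "transversals" `A ∖ Λ` and `B ∖ Λ`. Pushing an element of
`Λ` through a reduced word from left to right, one letter at a time, rewrites it as a normal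
form for any pair of transversals `T, T'`, with every letter kept on its side. Hence `X` is the
set of elements represented by a reduced word starting in `A`: it does not depend on `T, T'`,
and it is stable under left multiplication by `Λ`.

Right multiplication by `c ∈ A ∪ B` only alters the end of a reduced word, so `Xc ⊆ X ∪ Λ`;
thus `Λ\Xc` and `Λ\X` can only differ in the cosets `Λ` and `Λc`. The elements `g` with
`Λ\Xg` almost equal to `Λ\X` form a subgroup, which contains `A` and `B`, hence is `G`.
-/

open scoped Pointwise symmDiff

/-- `T` is a right transversal for `Λ` in `A` containing `1`: `T ⊆ A`, `1 ∈ T`, and each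
coset `aΛ` (`a ∈ A`) contains exactly one element of `T`. -/
def IsRightTransversalOf {G : Type*} [Group G] (Lam A : Subgroup G) (T : Set G) : Prop :=
  T ⊆ (A : Set G) ∧ (1 : G) ∈ T ∧ ∀ a ∈ A, ∃! t, t ∈ T ∧ t⁻¹ * a ∈ Lam

/-- `l` is a normal word with respect to the transversals `T` (for `Λ` in `A`) and `T'`
(for `Λ` in `B`): a list of non-identity letters alternating between `T` and `T'`.
Such a list, followed by an element `λ ∈ Λ`, is the normal form `a₁b₁⋯aₙbₙλ` (where `a₁`,
resp. `bₙ`, may be trivial, i.e. absent). -/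
def IsNormalWord {G : Type*} [Group G] (T T' : Set G) (l : List G) : Prop :=
  (∀ x ∈ l, x ≠ 1 ∧ (x ∈ T ∨ x ∈ T')) ∧
    l.Chain' fun x y => (x ∈ T ∧ y ∈ T') ∨ (x ∈ T' ∧ y ∈ T)

/-- Every element of `G` is expressible uniquely in the normal form `a₁b₁⋯aₙbₙλ`.
Together with `IsRightTransversalOf` hypotheses and `Λ = A ⊓ B`, this encodes that `G` is
the amalgamated free product `A ∗_Λ B`. -/
def HasUniqueNormalForms {G : Type*} [Group G] (Lam : Subgroup G) (T T' : Set G) : Prop :=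
  ∀ g : G, ∃! p : List G × G,
    IsNormalWord T T' p.1 ∧ p.2 ∈ Lam ∧ g = p.1.prod * p.2

/-- The set `X` of elements of `G` whose normal form `a₁b₁⋯aₙbₙλ` has `a₁` non-trivial,
i.e. whose normal word is nonempty and begins with a letter of `T`. -/
def amalgX {G : Type*} [Group G] (Lam : Subgroup G) (T T' : Set G) : Set G :=
  {g : G | ∃ (l : List G) (lam : G), IsNormalWord T T' l ∧ lam ∈ Lam ∧
    g = l.prod * lam ∧ ∃ x, l.head? = some x ∧ x ∈ T}

/-- The image of a subset `X ⊆ G` in the set `H\G` of right cosets `Hg`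
(the quotient of `G` by the left multiplication action of `H`). -/
def rproj {G : Type*} [Group G] (H : Subgroup G) (X : Set G) :
    Set (Quotient (QuotientGroup.rightRel H)) :=
  Quotient.mk (QuotientGroup.rightRel H) '' X

/-- Two sets are almost equal if their symmetric difference is finite. -/
def AlmostEqSets {α : Type*} (A B : Set α) : Prop :=
  (A ∆ B).Finite

/-- `X ⊆ G` is `H`-almost invariant: `hX = X` for all `h ∈ H`, and for every `g ∈ G`
the sets `(H\X)g` and `H\X` are almost equal. -/
def IsAlmostInvariant {G : Type*} [Group G] (H : Subgroup G) (X : Set G) : Prop :=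
  (∀ h ∈ H, h • X = X) ∧
    ∀ g : G, AlmostEqSets (rproj H ((fun x => x * g) '' X)) (rproj H X)

namespace IsNormalWord

variable {G : Type*} [Group G] {S S' T T' : Set G} {l l' : List G} {x : G}

theorem symm (hl : IsNormalWord S S' l) : IsNormalWord S' S l :=
  ⟨fun x hx => (hl.1 x hx).imp_right Or.symm, hl.2.imp fun _ _ => Or.symm⟩

theorem cons_iff : IsNormalWord S S' (x :: l) ↔ x ≠ 1 ∧ (x ∈ S ∨ x ∈ S') ∧
    (∀ y ∈ l.head?, (x ∈ S ∧ y ∈ S') ∨ (x ∈ S' ∧ y ∈ S)) ∧ IsNormalWord S S' l := by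
  show (∀ y ∈ x :: l, _) ∧ List.IsChain _ (x :: l) ↔ _
  simp only [List.mem_cons, forall_eq_or_imp, List.isChain_cons]
  exact ⟨fun ⟨⟨hx, hl⟩, hlink, hchain⟩ => ⟨hx.1, hx.2, hlink, hl, hchain⟩,
    fun ⟨hx1, hx, hlink, hl, hchain⟩ => ⟨⟨⟨hx1, hx⟩, hl⟩, hlink, hchain⟩⟩

theorem of_forall₂ (hl : IsNormalWord S S' l)
    (h : List.Forall₂ (fun x y => (x ∈ S → y ∈ T) ∧ (x ∈ S' → y ∈ T') ∧ y ≠ 1) l l') :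
    IsNormalWord T T' l' := by
  induction h with
  | nil => exact ⟨by simp, List.isChain_nil⟩
  | @cons x y l l' hxy hll' ih =>
    obtain ⟨-, hx, hlink, hl⟩ := cons_iff.1 hl
    refine cons_iff.2 ⟨hxy.2.2, hx.imp hxy.1 hxy.2.1, ?_, ih hl⟩
    cases hll' with
    | nil => simp
    | cons hzw _ =>
      simp only [List.head?_cons, Option.mem_def, Option.some.injEq, forall_eq'] at hlink ⊢
      exact hlink.imp (fun h => ⟨hxy.1 h.1, hzw.2.1 h.2⟩) fun h => ⟨hxy.2.1 h.1, hzw.1 h.2⟩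

end IsNormalWord

theorem List.exists_forall₂_mul_prod {M : Type*} [Monoid M] {H : Set M} {R : M → M → Prop}
    {l : List M} (h : ∀ x ∈ l, ∀ μ ∈ H, ∃ t, ∃ ν ∈ H, μ * x = t * ν ∧ R x t) {μ : M}
    (hμ : μ ∈ H) : ∃ l', ∃ ν ∈ H, μ * l.prod = l'.prod * ν ∧ List.Forall₂ R l l' := by
  induction l generalizing μ with
  | nil => exact ⟨[], μ, hμ, by simp, .nil⟩
  | cons x l ih =>
    obtain ⟨t, ν, hν, hx, hxt⟩ := h x List.mem_cons_self μ hμ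
    obtain ⟨l', ν', hν', hl, hll'⟩ :=
      ih (fun y hy => h y (List.mem_cons_of_mem x hy)) hν
    refine ⟨t :: l', ν', hν', ?_, .cons hxt hll'⟩
    rw [List.prod_cons, List.prod_cons, ← mul_assoc, hx, mul_assoc, hl, mul_assoc]

namespace IsRightTransversalOf

variable {G : Type*} [Group G] {Lam A : Subgroup G} {T : Set G}

theorem eq_one_of_mem (hT : IsRightTransversalOf Lam A T) {x : G} (hx : x ∈ T)
    (hxL : x ∈ Lam) : x = 1 := by
  obtain ⟨t, -, ht⟩ := hT.2.2 x (hT.1 hx)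
  exact (ht x ⟨hx, by simp⟩).trans (ht 1 ⟨hT.2.1, by simpa using hxL⟩).symm

theorem mem_diff (hT : IsRightTransversalOf Lam A T) {x : G} (hx : x ∈ T) (hx1 : x ≠ 1) :
    x ∈ (A \ Lam : Set G) :=
  ⟨hT.1 hx, fun hxL => hx1 (hT.eq_one_of_mem hx hxL)⟩

theorem exists_eq_mul (hT : IsRightTransversalOf Lam A T) {a : G} (ha : a ∈ (A \ Lam : Set G)) :
    ∃ t ∈ T, t ≠ 1 ∧ ∃ ν ∈ Lam, a = t * ν := by
  obtain ⟨t, ⟨htT, hta⟩, -⟩ := hT.2.2 a ha.1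
  refine ⟨t, htT, ?_, t⁻¹ * a, hta, by group⟩
  rintro rfl
  exact ha.2 (by simpa using hta)

end IsRightTransversalOf

section ReducedWords

variable {G : Type*} [Group G] {P Q Lam : Subgroup G}

theorem mul_mem_amalgX_of_mem_diff {p h : G} (hp : p ∈ (P \ Lam : Set G))
    (hh : h ∈ Lam ∨ h ∈ amalgX Lam (Q \ Lam) (P \ Lam)) :
    p * h ∈ amalgX Lam (P \ Lam) (Q \ Lam) := by
  have hp1 : p ≠ 1 := fun h => hp.2 (h ▸ Lam.one_mem)
  rcases hh with hh | ⟨l, lam, hl, hlam, rfl, q, hq, hqQ⟩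
  · exact ⟨[p], h, IsNormalWord.cons_iff.2 ⟨hp1, Or.inl hp, by simp, ⟨by simp, .nil⟩⟩, hh,
      by simp, p, rfl, hp⟩
  · refine ⟨p :: l, lam, IsNormalWord.cons_iff.2 ⟨hp1, Or.inl hp, ?_, hl.symm⟩, hlam,
      by rw [List.prod_cons, mul_assoc], p, rfl, hp⟩
    simp only [hq, Option.mem_def, Option.some.injEq, forall_eq']
    exact Or.inl ⟨hp, hqQ⟩

theorem mem_or_mem_amalgX_of_mem {p : G} (hp : p ∈ P) :
    p ∈ Lam ∨ p ∈ amalgX Lam (P \ Lam) (Q \ Lam) :=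
  (em (p ∈ Lam)).imp_right fun h => by
    simpa using mul_mem_amalgX_of_mem_diff (Q := Q) ⟨hp, h⟩ (Or.inl Lam.one_mem)

theorem cons_prod_mul_mem_amalgX_or_mem (hPQ : Lam = P ⊓ Q) (l : List G) {x c : G}
    (hx : x ∈ (P \ Lam : Set G)) (hl : IsNormalWord (P \ Lam) (Q \ Lam) (x :: l))
    (hc : c ∈ P ∨ c ∈ Q) :
    (x :: l).prod * c ∈ amalgX Lam (P \ Lam) (Q \ Lam) ∨ (x :: l).prod * c ∈ Lam := by
  -- Removing the first letter exchanges the roles of `P` and `Q`.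
  induction l generalizing P Q x with
  | nil =>
    simp only [List.prod_cons, List.prod_nil, mul_one]
    rcases hc with hc | hc
    · exact (mem_or_mem_amalgX_of_mem (P.mul_mem hx.1 hc)).symm
    · exact Or.inl (mul_mem_amalgX_of_mem_diff hx (mem_or_mem_amalgX_of_mem hc))
  | cons y l ih =>
    obtain ⟨-, -, hlink, hyl⟩ := IsNormalWord.cons_iff.1 hl
    have hy : y ∈ (Q \ Lam : Set G) := by
      simp only [List.head?_cons, Option.mem_def, Option.some.injEq, forall_eq'] at hlink
      exact (hlink.resolve_right fun h => h.1.2 (hPQ ▸ ⟨hx.1, h.1.1⟩)).2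
    rw [List.prod_cons, mul_assoc]
    exact Or.inl (mul_mem_amalgX_of_mem_diff hx
      (ih (hPQ.trans (inf_comm P Q)) hy hyl.symm hc.symm).symm)

theorem mul_mem_amalgX_or_mem (hPQ : Lam = P ⊓ Q) {g c : G}
    (hg : g ∈ amalgX Lam (P \ Lam) (Q \ Lam)) (hc : c ∈ P ∨ c ∈ Q) :
    g * c ∈ amalgX Lam (P \ Lam) (Q \ Lam) ∨ g * c ∈ Lam := by
  obtain ⟨l, lam, hl, hlam, rfl, x, hx, hxP⟩ := hg
  cases l with
  | nil => simp at hx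
  | cons x' l =>
    obtain rfl := Option.some.inj hx
    have hlamc : lam * c ∈ P ∨ lam * c ∈ Q := hc.imp
      (P.mul_mem (hPQ.le.trans inf_le_left hlam)) (Q.mul_mem (hPQ.le.trans inf_le_right hlam))
    rw [mul_assoc]
    exact cons_prod_mul_mem_amalgX_or_mem hPQ l hxP hl hlamc

end ReducedWords

section Amalgam

variable {G : Type*} [Group G] {A B Lam : Subgroup G} {T T' : Set G}

theorem exists_mul_eq_transversal_mul (hAB : Lam = A ⊓ B) (hT : IsRightTransversalOf Lam A T)
    (hT' : IsRightTransversalOf Lam B T') {x μ : G}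
    (hx : x ∈ (A \ Lam : Set G) ∨ x ∈ (B \ Lam : Set G)) (hμ : μ ∈ Lam) :
    ∃ t, ∃ ν ∈ Lam, μ * x = t * ν ∧
      (x ∈ (A \ Lam : Set G) → t ∈ T) ∧ (x ∈ (B \ Lam : Set G) → t ∈ T') ∧ t ≠ 1 := by
  have hμx (P : Subgroup G) (hP : Lam ≤ P) (hx : x ∈ (P \ Lam : Set G)) :
      μ * x ∈ (P \ Lam : Set G) :=
    ⟨P.mul_mem (hP hμ) hx.1, fun h => hx.2 (by simpa using Lam.mul_mem (Lam.inv_mem hμ) h)⟩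
  rcases hx with hx | hx
  · obtain ⟨t, ht, ht1, ν, hν, h⟩ := hT.exists_eq_mul (hμx A (hAB ▸ inf_le_left) hx)
    exact ⟨t, ν, hν, h, fun _ => ht, fun h => (h.2 (hAB ▸ ⟨hx.1, h.1⟩)).elim, ht1⟩
  · obtain ⟨t, ht, ht1, ν, hν, h⟩ := hT'.exists_eq_mul (hμx B (hAB ▸ inf_le_right) hx)
    exact ⟨t, ν, hν, h, fun h => (h.2 (hAB ▸ ⟨h.1, hx.1⟩)).elim, fun _ => ht, ht1⟩

theorem lam_mul_mem_amalgX (hAB : Lam = A ⊓ B) (hT : IsRightTransversalOf Lam A T)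
    (hT' : IsRightTransversalOf Lam B T') {μ g : G} (hμ : μ ∈ Lam)
    (hg : g ∈ amalgX Lam (A \ Lam) (B \ Lam)) : μ * g ∈ amalgX Lam T T' := by
  obtain ⟨l, lam, hl, hlam, rfl, x, hx, hxA⟩ := hg
  obtain ⟨l', ν, hν, hμl, hll'⟩ := List.exists_forall₂_mul_prod
    (fun y hy μ hμ => exists_mul_eq_transversal_mul hAB hT hT' (hl.1 y hy).2 hμ) hμ
  refine ⟨l', ν * lam, hl.of_forall₂ hll', Lam.mul_mem hν hlam, ?_, ?_⟩
  · rw [← mul_assoc, hμl, mul_assoc]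
  cases hll' with
  | nil => simp at hx
  | cons hxt _ =>
    obtain rfl := Option.some.inj hx
    exact ⟨_, rfl, hxt.1 hxA⟩

theorem amalgX_eq_amalgX_diff (hAB : Lam = A ⊓ B) (hT : IsRightTransversalOf Lam A T)
    (hT' : IsRightTransversalOf Lam B T') :
    amalgX Lam T T' = amalgX Lam (A \ Lam) (B \ Lam) := by
  refine subset_antisymm ?_ fun g hg => by
    simpa using lam_mul_mem_amalgX hAB hT hT' Lam.one_mem hg
  rintro g ⟨l, lam, hl, hlam, rfl, x, hx, hxT⟩
  have hletter : ∀ y ∈ l, y ≠ 1 := fun y hy => (hl.1 y hy).1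
  have hl' : IsNormalWord (A \ Lam) (B \ Lam) l := hl.of_forall₂ <| List.forall₂_same.2
    fun y hy => ⟨(hT.mem_diff · (hletter y hy)), (hT'.mem_diff · (hletter y hy)), hletter y hy⟩
  exact ⟨l, lam, hl', hlam, rfl, x, hx, hT.mem_diff hxT (hletter x (List.mem_of_mem_head? hx))⟩

theorem smul_amalgX_eq (hAB : Lam = A ⊓ B) (hT : IsRightTransversalOf Lam A T)
    (hT' : IsRightTransversalOf Lam B T') {μ : G} (hμ : μ ∈ Lam) :
    μ • amalgX Lam T T' = amalgX Lam T T' := by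
  have h (ν : G) (hν : ν ∈ Lam) : ν • amalgX Lam T T' ⊆ amalgX Lam T T' := by
    rw [Set.smul_set_subset_iff]
    intro g hg
    rw [amalgX_eq_amalgX_diff hAB hT hT'] at hg
    exact lam_mul_mem_amalgX hAB hT hT' hν hg
  exact (h μ hμ).antisymm (Set.subset_smul_set_iff.2 (h μ⁻¹ (Lam.inv_mem hμ)))

theorem sup_eq_top_of_hasUniqueNormalForms (hLA : Lam ≤ A) (hTA : T ⊆ A) (hTB : T' ⊆ B)
    (hNF : HasUniqueNormalForms Lam T T') : A ⊔ B = ⊤ := by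
  refine eq_top_iff.2 fun g _ => ?_
  obtain ⟨⟨l, lam⟩, ⟨hl, hlam, rfl⟩, -⟩ := hNF g
  refine mul_mem (list_prod_mem fun x hx => ?_) (Subgroup.mem_sup_left (hLA hlam))
  exact (hl.1 x hx).2.elim (fun h => Subgroup.mem_sup_left (hTA h))
    fun h => Subgroup.mem_sup_right (hTB h)

end Amalgam

namespace AlmostEqSets

variable {α : Type*} {s t u : Set α}

theorem refl (s : Set α) : AlmostEqSets s s := by
  simp [AlmostEqSets]

theorem symm (h : AlmostEqSets s t) : AlmostEqSets t s := by
  rwa [AlmostEqSets, symmDiff_comm]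

theorem trans (h₁ : AlmostEqSets s t) (h₂ : AlmostEqSets t u) : AlmostEqSets s u :=
  (h₁.union h₂).subset (symmDiff_triangle s t u)

theorem image {β : Type*} {f : α → β} (hf : Function.Injective f) (h : AlmostEqSets s t) :
    AlmostEqSets (f '' s) (f '' t) := by
  rw [AlmostEqSets, ← Set.image_symmDiff hf]
  exact Set.Finite.image f h

end AlmostEqSets

section AlmostStabilizer

open QuotientGroup

variable {G : Type*} [Group G] (H : Subgroup G)

theorem rightRel_mul_right_iff {x y : G} (g : G) :
    rightRel H (x * g) (y * g) ↔ rightRel H x y := by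
  simp [rightRel_apply, mul_assoc]

def rightCosetMul (g : G) : Quotient (rightRel H) → Quotient (rightRel H) :=
  Quotient.map (· * g) fun _ _ h => (rightRel_mul_right_iff H g).2 h

theorem rightCosetMul_injective (g : G) : Function.Injective (rightCosetMul H g) :=
  fun p q => Quotient.inductionOn₂ p q fun _ _ h =>
    Quotient.sound ((rightRel_mul_right_iff H g).1 (Quotient.exact h))

theorem rproj_image_mul_right (g : G) (X : Set G) :
    rproj H ((· * g) '' X) = rightCosetMul H g '' rproj H X := by
  simp only [rproj, Set.image_image]
  rfl

theorem image_mul_right_mul (g h : G) (X : Set G) :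
    (· * (g * h)) '' X = (· * h) '' ((· * g) '' X) := by
  simp only [Set.image_image, mul_assoc]

def almostStabilizer (X : Set G) : Subgroup G where
  carrier := {g | AlmostEqSets (rproj H ((· * g) '' X)) (rproj H X)}
  one_mem' := by simpa using AlmostEqSets.refl _
  mul_mem' {g h} hg hh := by
    simp only [Set.mem_ofPred_eq, image_mul_right_mul g h, rproj_image_mul_right H h] at hg hh ⊢
    exact (hg.image (rightCosetMul_injective H h)).trans hh
  inv_mem' {g} hg := by
    have h := hg.image (rightCosetMul_injective H g⁻¹)
    rw [← rproj_image_mul_right, ← rproj_image_mul_right, ← image_mul_right_mul,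
      mul_inv_cancel] at h
    simpa using h.symm

variable {H} in
theorem le_almostStabilizer {K : Subgroup G} {X : Set G}
    (hK : ∀ k ∈ K, ∀ x ∈ X, x * k ∈ X ∨ x * k ∈ H) : K ≤ almostStabilizer H X := by
  intro k hk
  refine (Set.finite_singleton (⟦1⟧ : Quotient (rightRel H))).insert ⟦k⟧ |>.subset ?_
  rintro _ (⟨⟨_, ⟨x, hx, rfl⟩, rfl⟩, hnot⟩ | ⟨⟨x, hx, rfl⟩, hnot⟩)
  · have hxk : x * k ∈ H := (hK k hk x hx).resolve_left fun h => hnot ⟨_, h, rfl⟩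
    exact Or.inr (Quotient.sound (by simpa [rightRel_apply] using H.inv_mem hxk))
  · have hxk : x * k⁻¹ ∈ H := (hK k⁻¹ (K.inv_mem hk) x hx).resolve_left
      fun h => hnot ⟨_, ⟨_, h, rfl⟩, by simp⟩
    exact Or.inl (Quotient.sound (by simpa [rightRel_apply] using H.inv_mem hxk))

end AlmostStabilizer

theorem amalgX_is_almost_invariant_general {G : Type*} [Group G]
    (A B Lam : Subgroup G) (hAB : Lam = A ⊓ B)
    (T T' : Set G)
    (hT : IsRightTransversalOf Lam A T) (hT' : IsRightTransversalOf Lam B T')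
    (hNF : HasUniqueNormalForms Lam T T')
    (X : Set G) (hX : X = amalgX Lam T T') :
    (∀ lam ∈ Lam, lam • X = X) ∧
    (∀ g : G, AlmostEqSets (rproj Lam ((fun x => x * g) '' X)) (rproj Lam X)) ∧
    (∀ T₂ T₂' : Set G, IsRightTransversalOf Lam A T₂ → IsRightTransversalOf Lam B T₂' →
      HasUniqueNormalForms Lam T₂ T₂' → amalgX Lam T₂ T₂' = X) ∧
    IsAlmostInvariant Lam X := by
  have hX₀ : X = amalgX Lam (A \ Lam) (B \ Lam) := hX.trans (amalgX_eq_amalgX_diff hAB hT hT')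
  have hsmul : ∀ lam ∈ Lam, lam • X = X := fun lam hlam => hX ▸ smul_amalgX_eq hAB hT hT' hlam
  have hstab : ⊤ ≤ almostStabilizer Lam X := by
    rw [← sup_eq_top_of_hasUniqueNormalForms (hAB.le.trans inf_le_left) hT.1 hT'.1 hNF, hX₀]
    exact sup_le (le_almostStabilizer fun _ hk _ hx => mul_mem_amalgX_or_mem hAB hx (Or.inl hk))
      (le_almostStabilizer fun _ hk _ hx => mul_mem_amalgX_or_mem hAB hx (Or.inr hk))
  have halmost (g : G) := hstab (Subgroup.mem_top g)
  exact ⟨hsmul, halmost, fun T₂ T₂' hT₂ hT₂' _ => hX₀ ▸ amalgX_eq_amalgX_diff hAB hT₂ hT₂',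
    hsmul, halmost⟩

theorem amalgX_is_almost_invariant {G : Type*} [Group G]
    (A B Lam : Subgroup G) (hA : Lam < A) (hB : Lam < B) (hAB : Lam = A ⊓ B)
    (T T' : Set G)
    (hT : IsRightTransversalOf Lam A T) (hT' : IsRightTransversalOf Lam B T')
    (hNF : HasUniqueNormalForms Lam T T')
    (X : Set G) (hX : X = amalgX Lam T T') :
    (∀ lam ∈ Lam, lam • X = X) ∧
    (∀ g : G, AlmostEqSets (rproj Lam ((fun x => x * g) '' X)) (rproj Lam X)) ∧
    (∀ T₂ T₂' : Set G, IsRightTransversalOf Lam A T₂ → IsRightTransversalOf Lam B T₂' →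
      HasUniqueNormalForms Lam T₂ T₂' → amalgX Lam T₂ T₂' = X) ∧
    IsAlmostInvariant Lam X :=
  amalgX_is_almost_invariant_general A B Lam hAB T T' hT hT' hNF X hX
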